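/- Let N ≥ 2, x ∈ ℝ^N with x_N ≥ 0, 0 ≤ ε < 1. Then for all y = (y', y_N) with y_N ≥ 0 and y ≠ x, the vertical derivative of the regularized Green function satisfies |∂_{y_N} G^x_ε(y)| ≤ (N+1) C'_N · x_N / (ε² + |x - y|²)^(N/2). -/

import Mathlib

open Filter

/-- Surface measure of the unit sphere in `ℝ^N`: `σ_N = 2 π^(N/2) / Γ(N/2)`. -/
noncomputable def sigmaN (N : ℕ) : ℝ := 2 * Real.pi ^ ((N : ℝ) / 2) / Real.Gamma ((N : ℝ) / 2)

/-- `C_N⁻¹ = σ_N max{N-2, 1}`. -/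
noncomputable def constCN (N : ℕ) : ℝ := 1 / (sigmaN N * max ((N : ℝ) - 2) 1)

/-- `C'_N = 2 / σ_N`. -/
noncomputable def constC'N (N : ℕ) : ℝ := 2 / sigmaN N

/-- Reflection of a point of `ℝ^N` across the hyperplane `{x_N = 0}`. -/
noncomputable def reflectPt {N : ℕ} (x : EuclideanSpace ℝ (Fin N)) :
    EuclideanSpace ℝ (Fin N) :=
  WithLp.toLp 2 (fun i => if i.val = N - 1 then -(x i) else x i)

/-- Regularized fundamental solution of `-Δ` on `ℝ^N`. -/
noncomputable def GammaEps (N : ℕ) (ε : ℝ) (x y : EuclideanSpace ℝ (Fin N)) : ℝ :=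
  if N = 2 then -(constCN 2 / 2) * Real.log (ε ^ 2 + ‖x - y‖ ^ 2)
  else constCN N * (ε ^ 2 + ‖x - y‖ ^ 2) ^ (-(((N : ℝ) - 2) / 2))

/-- Regularized Green function of `-Δ` on the half-space, via reflection. -/
noncomputable def GEps (N : ℕ) (ε : ℝ) (x y : EuclideanSpace ℝ (Fin N)) : ℝ :=
  GammaEps N ε x y - GammaEps N ε (reflectPt x) y

/-- Mean value inequality for `rpow`. -/
lemma rpow_sub_rpow_le' {s a b : ℝ} (hs : 1 ≤ s) (ha : 0 < a) (hab : a ≤ b) :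
    b ^ s - a ^ s ≤ s * b ^ (s - 1) * (b - a) := by
  rcases eq_or_lt_of_le hab with rfl | hab
  · simp
  have hb : 0 < b := ha.trans hab
  have hcont : ContinuousOn (fun t : ℝ => t ^ s) (Set.Icc a b) := by
    intro t ht
    exact (Real.continuousAt_rpow_const t s (Or.inl (ha.trans_le ht.1).ne')).continuousWithinAt
  have hder : ∀ t ∈ Set.Ioo a b, HasDerivAt (fun t : ℝ => t ^ s) (s * t ^ (s - 1)) t := by
    intro t ht
    exact Real.hasDerivAt_rpow_const (Or.inl (ha.trans ht.1).ne')
  obtain ⟨c, hc, hceq⟩ := exists_hasDerivAt_eq_slope _ _ hab hcont hder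
  have hcpos : 0 < c := ha.trans hc.1
  have h1 : s * c ^ (s - 1) ≤ s * b ^ (s - 1) := by
    have : c ^ (s - 1) ≤ b ^ (s - 1) :=
      Real.rpow_le_rpow hcpos.le hc.2.le (by linarith)
    nlinarith
  have h2 : b ^ s - a ^ s = s * c ^ (s - 1) * (b - a) := by
    rw [hceq, div_mul_cancel₀ _ (sub_ne_zero.2 hab.ne')]
  rw [h2]
  have : 0 ≤ b - a := by linarith
  nlinarith

/-- Core real-number estimate. -/
lemma core_ineq {s xN yN a₂ a₁ : ℝ} (hs : 1 ≤ s) (hx : 0 ≤ xN) (hy : 0 ≤ yN)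
    (ha₂ : 0 < a₂) (h12 : a₁ = a₂ + 4 * xN * yN) (hbig : (xN + yN) ^ 2 ≤ a₁) :
    |(xN - yN) / a₂ ^ s + (xN + yN) / a₁ ^ s| ≤ (2 + 4 * s) * xN / a₂ ^ s := by
  have ha₂₁ : a₂ ≤ a₁ := by nlinarith
  have ha₁ : 0 < a₁ := lt_of_lt_of_le ha₂ ha₂₁
  set A₂ := a₂ ^ s with hA₂
  set A₁ := a₁ ^ s with hA₁
  have hA2 : 0 < A₂ := Real.rpow_pos_of_pos ha₂ s
  have hA1 : 0 < A₁ := Real.rpow_pos_of_pos ha₁ s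
  have hAle : A₂ ≤ A₁ := Real.rpow_le_rpow ha₂.le ha₂₁ (by linarith)
  have hmvt : A₁ - A₂ ≤ s * (A₁ / a₁) * (4 * xN * yN) := by
    have h := rpow_sub_rpow_le' hs ha₂ ha₂₁
    rw [Real.rpow_sub ha₁, Real.rpow_one] at h
    have hd : a₁ - a₂ = 4 * xN * yN := by rw [h12]; ring
    rw [hd] at h
    exact h
  have hkey : (xN + yN) * (1 / A₂ - 1 / A₁) ≤ 4 * s * xN * (1 / A₂) := by
    have e1 : 1 / A₂ - 1 / A₁ = (A₁ - A₂) * (1 / A₂ * (1 / A₁)) := by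
      field_simp
    rw [e1]
    have hfrac : (xN + yN) * yN / a₁ ≤ 1 := by
      rw [div_le_one ha₁]
      nlinarith
    calc (xN + yN) * ((A₁ - A₂) * (1 / A₂ * (1 / A₁)))
        ≤ (xN + yN) * ((s * (A₁ / a₁) * (4 * xN * yN)) * (1 / A₂ * (1 / A₁))) := by
          gcongr
      _ = (4 * s * xN) * ((xN + yN) * yN / a₁) * (1 / A₂) := by
          field_simp
      _ ≤ (4 * s * xN) * 1 * (1 / A₂) := by
          gcongr
      _ = 4 * s * xN * (1 / A₂) := by ring
  have expand : (xN - yN) / A₂ + (xN + yN) / A₁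
      = 2 * xN * (1 / A₂) + (xN + yN) * (1 / A₁ - 1 / A₂) := by
    field_simp; ring
  rw [expand]
  have ht : 0 ≤ (xN + yN) * (1 / A₂ - 1 / A₁) := by
    have : 1 / A₁ ≤ 1 / A₂ := one_div_le_one_div_of_le hA2 hAle
    have := sub_nonneg.2 this
    positivity
  have hP : 0 ≤ 2 * xN * (1 / A₂) := by positivity
  have habs : |2 * xN * (1 / A₂) + (xN + yN) * (1 / A₁ - 1 / A₂)|
      ≤ 2 * xN * (1 / A₂) + (xN + yN) * (1 / A₂ - 1 / A₁) := by
    rw [abs_le]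
    constructor <;> nlinarith
  calc |2 * xN * (1 / A₂) + (xN + yN) * (1 / A₁ - 1 / A₂)|
      ≤ 2 * xN * (1 / A₂) + (xN + yN) * (1 / A₂ - 1 / A₁) := habs
    _ ≤ 2 * xN * (1 / A₂) + 4 * s * xN * (1 / A₂) := by linarith
    _ = (2 + 4 * s) * xN / A₂ := by ring

lemma hasFDerivAt_sq_dist' {N : ℕ} (x y : EuclideanSpace ℝ (Fin N)) (ε : ℝ) :
    HasFDerivAt (fun z : EuclideanSpace ℝ (Fin N) => ε ^ 2 + ‖x - z‖ ^ 2)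
      ((-2 : ℝ) • (innerSL ℝ (x - y))) y := by
  have h1 : HasFDerivAt (fun z : EuclideanSpace ℝ (Fin N) => x - z)
      (-(ContinuousLinearMap.id ℝ (EuclideanSpace ℝ (Fin N)))) y :=
    (hasFDerivAt_id y).const_sub x
  have h2 := (h1.inner ℝ h1).const_add (ε ^ 2)
  have heq : (fun z : EuclideanSpace ℝ (Fin N) => ε ^ 2 + (inner ℝ (x - z) (x - z) : ℝ))
      = fun z => ε ^ 2 + ‖x - z‖ ^ 2 := by
    funext z; rw [real_inner_self_eq_norm_sq]
  rw [heq] at h2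
  refine h2.congr_fderiv (Eq.symm ?_)
  ext v
  simp only [ContinuousLinearMap.smul_apply, ContinuousLinearMap.comp_apply,
    ContinuousLinearMap.prod_apply, fderivInnerCLM_apply, ContinuousLinearMap.neg_apply,
    ContinuousLinearMap.id_apply, inner_neg_left, inner_neg_right, smul_eq_mul,
    innerSL_apply_apply]
  rw [real_inner_comm v (x - y)]
  ring

lemma constCN_mul_max (N : ℕ) :
    constCN N * max ((N : ℝ) - 2) 1 = 1 / sigmaN N := by
  have hm : (1 : ℝ) ≤ max ((N : ℝ) - 2) 1 := le_max_right _ _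
  have hm0 : max ((N : ℝ) - 2) 1 ≠ 0 := by linarith
  rw [constCN, one_div, mul_inv, mul_assoc, inv_mul_cancel₀ hm0, mul_one, one_div]

lemma hasFDerivAt_gammaEps (N : ℕ) (hN : 2 ≤ N) (ε : ℝ) (x y : EuclideanSpace ℝ (Fin N))
    (ha : 0 < ε ^ 2 + ‖x - y‖ ^ 2) :
    HasFDerivAt (fun z => GammaEps N ε x z)
      (((1 / sigmaN N) * (ε ^ 2 + ‖x - y‖ ^ 2) ^ (-((N : ℝ) / 2))) • (innerSL ℝ (x - y))) y := by
  set a := ε ^ 2 + ‖x - y‖ ^ 2 with ha'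
  have hsq := hasFDerivAt_sq_dist' x y ε
  by_cases h2 : N = 2
  · subst h2
    have hf : HasDerivAt (fun t : ℝ => -(constCN 2 / 2) * Real.log t)
        (-(constCN 2 / 2) * a⁻¹) a := (Real.hasDerivAt_log ha.ne').const_mul _
    have := hf.comp_hasFDerivAt y hsq
    have hfun : ((fun t : ℝ => -(constCN 2 / 2) * Real.log t) ∘
        (fun z : EuclideanSpace ℝ (Fin 2) => ε ^ 2 + ‖x - z‖ ^ 2))
        = fun z => GammaEps 2 ε x z := by
      funext z; simp [GammaEps, Function.comp]
    rw [hfun] at this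
    refine this.congr_fderiv (Eq.symm ?_)
    rw [smul_smul]
    congr 1
    have hC : constCN 2 = 1 / sigmaN 2 := by
      have := constCN_mul_max 2
      simpa using this
    rw [hC]
    have h21 : -(((2 : ℕ) : ℝ) / 2) = (-1 : ℝ) := by norm_num
    rw [h21, Real.rpow_neg_one]
    ring
  · have h3 : 3 ≤ N := by omega
    set p : ℝ := -(((N : ℝ) - 2) / 2) with hp
    have hf : HasDerivAt (fun t : ℝ => constCN N * t ^ p)
        (constCN N * (p * a ^ (p - 1))) a :=
      (Real.hasDerivAt_rpow_const (Or.inl ha.ne')).const_mul _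
    have := hf.comp_hasFDerivAt y hsq
    have hfun : ((fun t : ℝ => constCN N * t ^ p) ∘
        (fun z : EuclideanSpace ℝ (Fin N) => ε ^ 2 + ‖x - z‖ ^ 2))
        = fun z => GammaEps N ε x z := by
      funext z; simp [GammaEps, Function.comp, h2, hp]
    rw [hfun] at this
    refine this.congr_fderiv (Eq.symm ?_)
    rw [smul_smul]
    congr 1
    have hmax : max ((N : ℝ) - 2) 1 = (N : ℝ) - 2 := by
      have : (3 : ℝ) ≤ (N : ℝ) := by exact_mod_cast h3
      rw [max_eq_left]; linarith
    have hC : constCN N * ((N : ℝ) - 2) = 1 / sigmaN N := by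
      rw [← hmax]; exact constCN_mul_max N
    have hp1 : p - 1 = -((N : ℝ) / 2) := by rw [hp]; ring
    rw [hp1, ← hC]
    ring

/-- Bound on the vertical derivative of the regularized Green function:
`|∂_{y_N} G^x_ε(y)| ≤ (N+1) C'_N x_N / (ε² + |x-y|²)^(N/2)`. -/
theorem stmt_7 (N : ℕ) (hN : 2 ≤ N) (ε : ℝ) (hε0 : 0 ≤ ε) (hε1 : ε < 1)
    (x y : EuclideanSpace ℝ (Fin N))
    (hx : 0 ≤ x ⟨N - 1, by omega⟩) (hy : 0 ≤ y ⟨N - 1, by omega⟩) (hxy : y ≠ x) :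
    |fderiv ℝ (fun z => GEps N ε x z) y (EuclideanSpace.single ⟨N - 1, by omega⟩ 1)| ≤
      ((N : ℝ) + 1) * constC'N N * (x ⟨N - 1, by omega⟩) /
        (ε ^ 2 + ‖x - y‖ ^ 2) ^ ((N : ℝ) / 2) := by
  have hN1 : N - 1 < N := by omega
  set j : Fin N := ⟨N - 1, hN1⟩ with hj
  show |fderiv ℝ (fun z => GEps N ε x z) y (EuclideanSpace.single j 1)| ≤
      ((N : ℝ) + 1) * constC'N N * (x j) / (ε ^ 2 + ‖x - y‖ ^ 2) ^ ((N : ℝ) / 2)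
  have hx' : 0 ≤ x j := hx
  have hy' : 0 ≤ y j := hy
  set xh := reflectPt x with hxh
  have hsub : ∀ (v w : EuclideanSpace ℝ (Fin N)) (i : Fin N), (v - w) i = v i - w i :=
    fun v w i => rfl
  have hnormsq : ∀ v : EuclideanSpace ℝ (Fin N), ‖v‖ ^ 2 = ∑ i, (v i) ^ 2 := by
    intro v
    rw [EuclideanSpace.norm_eq, Real.sq_sqrt (by positivity)]
    congr 1; funext i; rw [Real.norm_eq_abs, sq_abs]
  have hxhj : xh j = -(x j) := by
    simp [hxh, reflectPt, hj]
  have hxhi : ∀ i : Fin N, i ≠ j → xh i = x i := by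
    intro i hi
    have hvi : i.val ≠ N - 1 := by
      intro h; exact hi (Fin.ext (by simp [h, hj]))
    simp [hxh, reflectPt, hvi]
  have hyx : x - y ≠ 0 := sub_ne_zero.2 (Ne.symm hxy)
  have ha₂ : 0 < ε ^ 2 + ‖x - y‖ ^ 2 := by
    have : 0 < ‖x - y‖ := norm_pos_iff.2 hyx
    positivity
  have hdiff : ‖xh - y‖ ^ 2 = ‖x - y‖ ^ 2 + 4 * (x j) * (y j) := by
    rw [hnormsq, hnormsq]
    have key : ∀ i : Fin N, ((xh - y) i) ^ 2
        = ((x - y) i) ^ 2 + (if i = j then 4 * (x j) * (y j) else 0) := by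
      intro i
      by_cases hi : i = j
      · subst hi; rw [if_pos rfl, hsub, hsub, hxhj]; ring
      · rw [if_neg hi, hsub, hsub, hxhi i hi]; ring
    rw [Finset.sum_congr rfl fun i _ => key i, Finset.sum_add_distrib]
    simp
  have ha₁ : 0 < ε ^ 2 + ‖xh - y‖ ^ 2 := by
    rw [hdiff]
    nlinarith [mul_nonneg hx' hy']
  have h12 : ε ^ 2 + ‖xh - y‖ ^ 2 = (ε ^ 2 + ‖x - y‖ ^ 2) + 4 * (x j) * (y j) := by
    rw [hdiff]; ring
  have hbig : (x j + y j) ^ 2 ≤ ε ^ 2 + ‖xh - y‖ ^ 2 := by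
    have h1 : ((xh - y) j) ^ 2 ≤ ∑ i, ((xh - y) i) ^ 2 :=
      Finset.single_le_sum (fun i _ => sq_nonneg ((xh - y) i)) (Finset.mem_univ j)
    rw [← hnormsq] at h1
    have h2 : ((xh - y) j) ^ 2 = (x j + y j) ^ 2 := by
      rw [hsub, hxhj]; ring
    nlinarith [sq_nonneg ε]
  have hG1 := hasFDerivAt_gammaEps N hN ε x y ha₂
  have hG2 := hasFDerivAt_gammaEps N hN ε xh y ha₁
  have hG : HasFDerivAt (fun z => GEps N ε x z)
      ((((1 / sigmaN N) * (ε ^ 2 + ‖x - y‖ ^ 2) ^ (-((N : ℝ) / 2))) • (innerSL ℝ (x - y)))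
        - (((1 / sigmaN N) * (ε ^ 2 + ‖xh - y‖ ^ 2) ^ (-((N : ℝ) / 2))) • (innerSL ℝ (xh - y))))
      y := hG1.sub hG2
  rw [hG.fderiv]
  have hi1 : (inner ℝ (x - y) (EuclideanSpace.single j (1 : ℝ)) : ℝ) = x j - y j := by
    rw [EuclideanSpace.inner_single_right]
    simp [hsub]
  have hi2 : (inner ℝ (xh - y) (EuclideanSpace.single j (1 : ℝ)) : ℝ) = -(x j) - y j := by
    rw [EuclideanSpace.inner_single_right]
    simp [hsub, hxhj]
  simp only [ContinuousLinearMap.sub_apply, ContinuousLinearMap.smul_apply, innerSL_apply_apply,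
    smul_eq_mul, hi1, hi2]
  rw [Real.rpow_neg ha₂.le, Real.rpow_neg ha₁.le]
  have hσ : 0 < sigmaN N := by
    have hπ : 0 < Real.pi ^ ((N : ℝ) / 2) := Real.rpow_pos_of_pos Real.pi_pos _
    have hΓ : 0 < Real.Gamma ((N : ℝ) / 2) := by
      apply Real.Gamma_pos_of_pos
      have : (0 : ℝ) < (N : ℝ) := by positivity
      linarith
    exact div_pos (by linarith) hΓ
  set k : ℝ := 1 / sigmaN N with hk
  have hk0 : 0 ≤ k := by positivity
  set A₂ : ℝ := (ε ^ 2 + ‖x - y‖ ^ 2) ^ ((N : ℝ) / 2) with hA₂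
  set A₁ : ℝ := (ε ^ 2 + ‖xh - y‖ ^ 2) ^ ((N : ℝ) / 2) with hA₁
  have hval : k * A₂⁻¹ * (x j - y j) - k * A₁⁻¹ * (-(x j) - y j)
      = k * ((x j - y j) / A₂ + (x j + y j) / A₁) := by
    ring
  rw [hval, abs_mul, abs_of_nonneg hk0]
  have hs : (1 : ℝ) ≤ (N : ℝ) / 2 := by
    have : (2 : ℝ) ≤ (N : ℝ) := by exact_mod_cast hN
    linarith
  have hcore := core_ineq hs hx' hy' ha₂ h12 hbig
  calc k * |(x j - y j) / A₂ + (x j + y j) / A₁|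
      ≤ k * ((2 + 4 * ((N : ℝ) / 2)) * (x j) / A₂) := by
        exact mul_le_mul_of_nonneg_left hcore hk0
    _ = ((N : ℝ) + 1) * constC'N N * (x j) / A₂ := by
        rw [constC'N, hk]
        ring
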